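/- arXiv:1207.2335 — 6 statements merged into one kernel-verified Lean document; each statement's English description precedes it below -/
import Mathlib

section
/- Fix an integer d ≥ 7. There exist constants c₀ > 0 (depending only on d) and, for each integer c ≥ c₀, a constant C > 0 (depending only on d and c) such that the following holds for all positive integers k ≤ n with ck dividing dn. Let G be a random (d, dn/(ck))-biregular bipartite multigraph on n left vertices and m' = ck right vertices generated by the configuration model, and fix any set S of k left vertices. Then the probability that some nonempty subset S' ⊆ S satisfies |N(S')| < (2d/3)|S'| is at most C·k^{-d/6}; in particular, since d ≥ 7, this failure probability is o(1/k) as k → ∞. -/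
/-!
Union bound. If a nonempty `S' ⊆ S` with `|S'| = s` has at most `t = ⌊2ds/3⌋` neighbours, they lie
in some set `T` of `t` right vertices, so the uniform matching sends all `ds` half-edges of `S'`
into the `Dt` half-edges of `T`; this has probability at most `(Dt / dn)^(ds) = (t / ck)^(ds)`.
Summing over the `C(k, s)` choices of `S'` and the `C(ck, t)` choices of `T`, and bounding
`C(n, r) ≤ (3n / r)^r`, the `s`-th term is at most `(1/2)^s (s/k)^m` with `m = ⌈d/6⌉` as soon as
`c ≥ 3^(d+1) d`; since `∑ s^m 2^(-s)` converges, the total is `O(k^(-m)) = O(k^(-d/6))`.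
-/

open Finset Equiv
open scoped Nat

theorem Nat.descFactorial_mul_pow_le {b N : ℕ} (hb : b ≤ N) (a : ℕ) :
    b.descFactorial a * N ^ a ≤ N.descFactorial a * b ^ a := by
  induction a with
  | zero => simp
  | succ a ih =>
    have key : (b - a) * N ≤ (N - a) * b := by
      rw [Nat.sub_mul, Nat.sub_mul, mul_comm N b]
      exact Nat.sub_le_sub_left (Nat.mul_le_mul_left a hb) _
    calc b.descFactorial (a + 1) * N ^ (a + 1)
        = (b - a) * N * (b.descFactorial a * N ^ a) := by
          rw [Nat.descFactorial_succ, pow_succ]; ring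
      _ ≤ (N - a) * b * (N.descFactorial a * b ^ a) := Nat.mul_le_mul key ih
      _ = N.descFactorial (a + 1) * b ^ (a + 1) := by
          rw [Nat.descFactorial_succ, pow_succ]; ring

theorem Nat.choose_le_exp_one_mul_div_pow (n r : ℕ) :
    (n.choose r : ℝ) ≤ (Real.exp 1 * n / r) ^ r := by
  rcases r.eq_zero_or_pos with rfl | hr
  · simp
  have hr' : (0 : ℝ) < r := by exact_mod_cast hr
  have hfact : (r : ℝ) ^ r / r ! ≤ Real.exp 1 ^ r := by
    rw [← Real.exp_nat_mul, mul_one]; exact Real.pow_div_factorial_le_exp _ hr'.le r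
  calc (n.choose r : ℝ) ≤ n ^ r / r ! := Nat.choose_le_pow_div r n
    _ = (n / r) ^ r * (r ^ r / r !) := by rw [div_pow]; field_simp
    _ ≤ (n / r) ^ r * Real.exp 1 ^ r := by gcongr
    _ = (Real.exp 1 * n / r) ^ r := by rw [← mul_pow]; ring_nf

theorem Nat.choose_le_three_mul_div_pow (n r : ℕ) : (n.choose r : ℝ) ≤ (3 * n / r) ^ r :=
  (n.choose_le_exp_one_mul_div_pow r).trans (by gcongr; exact Real.exp_one_lt_three.le)

namespace Equiv.Perm

variable {α : Type*} [Fintype α] [DecidableEq α]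

theorem card_filter_forall_mem_apply_eq_self (A : Finset α) :
    #{τ : Perm α | ∀ x ∈ A, τ x = x} = (Fintype.card α - #A)! := by
  rw [← Fintype.card_subtype, ← Fintype.card_coe A, ← Fintype.card_subtype_compl,
    ← Fintype.card_perm]
  refine Fintype.card_congr ((Perm.subtypeEquivSubtypePerm (· ∉ A)).trans ?_).symm
  exact Equiv.subtypeEquivRight fun f => by simp only [not_not]

theorem card_filter_image_subset_le (A B : Finset α) :
    #{π : Perm α | A.image π ⊆ B} ≤ (Fintype.card α - #A)! * (#B).descFactorial #A := by
  set s : Finset (Perm α) := {π | A.image π ⊆ B}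
  -- Each fibre of `restrict` is a coset of the pointwise stabiliser of `A`, and on `s` its values
  -- are embeddings `A ↪ B`.
  let restrict : Perm α → A → α := fun π x => π x
  refine (card_le_mul_card_image (f := restrict) s _ fun g hg => ?_).trans
    (Nat.mul_le_mul_left _ ?_)
  · obtain ⟨π₀, -, rfl⟩ := mem_image.1 hg
    rw [← card_filter_forall_mem_apply_eq_self A]
    refine card_le_card_of_injOn (π₀⁻¹ * ·) (fun π hπ => ?_) fun _ _ _ _ h => mul_left_cancel h
    have hπ₀ := congrFun (mem_filter.1 hπ).2
    refine mem_coe.2 (mem_filter.2 ⟨mem_univ _, fun x hx => ?_⟩)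
    exact Perm.inv_eq_iff_eq.2 (hπ₀ ⟨x, hx⟩)
  · calc #(s.image restrict) ≤ #((univ : Finset (A ↪ B)).image fun e x => (e x : α)) := by
          refine card_le_card fun g hg => ?_
          obtain ⟨π, hπ, rfl⟩ := mem_image.1 hg
          refine mem_image.2 ⟨⟨fun x => ⟨π x, image_subset_iff.1 (mem_filter.1 hπ).2 x x.2⟩,
            fun x y h => ?_⟩, mem_univ _, rfl⟩
          exact Subtype.ext (π.injective (congrArg Subtype.val h))
      _ ≤ (#B).descFactorial #A := by
          refine card_image_le.trans_eq ?_
          rw [card_univ, Fintype.card_embedding_eq, Fintype.card_coe, Fintype.card_coe]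

theorem card_filter_image_subset_mul_pow_le (A B : Finset α) :
    #{π : Perm α | A.image π ⊆ B} * Fintype.card α ^ #A ≤ (Fintype.card α)! * #B ^ #A :=
  calc #{π : Perm α | A.image π ⊆ B} * Fintype.card α ^ #A
      ≤ (Fintype.card α - #A)! * (#B).descFactorial #A * Fintype.card α ^ #A :=
        Nat.mul_le_mul_right _ (card_filter_image_subset_le A B)
    _ ≤ (Fintype.card α - #A)! * ((Fintype.card α).descFactorial #A * #B ^ #A) := by
        rw [mul_assoc]
        exact Nat.mul_le_mul_left _ (Nat.descFactorial_mul_pow_le (card_le_univ B) _)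
    _ = (Fintype.card α)! * #B ^ #A := by
        rw [← mul_assoc, Nat.factorial_mul_descFactorial (card_le_univ A)]

theorem card_filter_image_subset_div_factorial_le [Nonempty α] (A B : Finset α) :
    (#{π : Perm α | A.image π ⊆ B} : ℝ) / (Fintype.card α)!
      ≤ (#B / Fintype.card α : ℝ) ^ #A := by
  rw [div_pow, div_le_div_iff₀ (by positivity) (by positivity), mul_comm ((#B : ℝ) ^ #A)]
  exact_mod_cast card_filter_image_subset_mul_pow_le A B

end Equiv.Perm

theorem Nat.card_filter_range_div_mem {q m : ℕ} {T : Finset ℕ} (hT : T ⊆ range m) :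
    #{h ∈ range (q * m) | h / q ∈ T} = q * #T := by
  rcases q.eq_zero_or_pos with rfl | hq
  · simp
  rw [card_eq_sum_card_fiberwise (s := {h ∈ range (q * m) | h / q ∈ T}) (f := (· / q)) (t := T)
    fun h hh => (mem_filter.1 hh).2]
  refine (sum_const_nat fun v hv' => ?_).trans (mul_comm _ _)
  have hv : v < m := mem_range.1 (hT hv')
  calc #{h ∈ {h ∈ range (q * m) | h / q ∈ T} | h / q = v} = #(Ico (q * v) (q * v + q)) := by
        congr 1
        ext h
        have hvm : q * v + q ≤ q * m := by nlinarith
        simp only [mem_filter, mem_range, mem_Ico, Nat.div_eq_iff hq, mul_comm v q]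
        constructor
        · rintro ⟨-, hle, hlt⟩
          omega
        · rintro ⟨hle, hlt⟩
          have hdiv : h / q = v := (Nat.div_eq_iff hq).2 (by rw [mul_comm v q]; omega)
          exact ⟨⟨by omega, hdiv ▸ hv'⟩, by omega, by omega⟩
    _ = q := by simp

theorem Fin.card_filter_val_div_mem {N q m : ℕ} (hN : N = q * m) {T : Finset ℕ}
    (hT : T ⊆ range m) : #{h : Fin N | (h : ℕ) / q ∈ T} = q * #T := by
  subst hN
  rw [← Nat.card_filter_range_div_mem hT, ← card_map Fin.valEmbedding]
  simp only [map_filter', valEmbedding_apply, exists_iff, exists_and_left, exists_prop,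
    exists_eq_right_right, map_valEmbedding_univ, Nat.Iio_eq_range]
  exact congrArg card (filter_congr fun x hx => and_iff_left (mem_range.1 hx))

theorem Finset.card_div_le_sum_card_div_of_subset_biUnion {ι β : Type*} [DecidableEq β]
    {s : Finset β} {I : Finset ι} {f : ι → Finset β} (h : s ⊆ I.biUnion f) {x : ℝ} (hx : 0 ≤ x) :
    (#s : ℝ) / x ≤ ∑ i ∈ I, (#(f i) : ℝ) / x := by
  rw [← sum_div]
  gcongr
  exact_mod_cast (card_le_card h).trans card_biUnion_le

/-- `N(S')` in the configuration model: left half-edge `h` sits at vertex `h / d`, right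
half-edge `h'` at vertex `h' / D`. -/
def rightNeighbors (d D : ℕ) {N : ℕ} (π : Perm (Fin N)) (S' : Finset ℕ) : Finset ℕ :=
  ({h : Fin N | (h : ℕ) / d ∈ S'} : Finset (Fin N)).image fun h => (π h : ℕ) / D

section ConfigurationModel

variable {d D M n : ℕ}

theorem card_filter_card_rightNeighbors_le_div_le (hDM : D * M = d * n) (hN : 0 < d * n)
    {S' : Finset ℕ} (hS' : S' ⊆ range n) {t : ℕ} (htM : t ≤ M) :
    (#{π : Perm (Fin (d * n)) | #(rightNeighbors d D π S') ≤ t} : ℝ) / (d * n)!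
      ≤ M.choose t * ((t : ℝ) / M) ^ (d * #S') := by
  have hD : 0 < D := Nat.pos_of_mul_pos_right (hDM ▸ hN)
  have : NeZero (d * n) := ⟨hN.ne'⟩
  set A : Finset (Fin (d * n)) := {h | (h : ℕ) / d ∈ S'}
  set B : Finset ℕ → Finset (Fin (d * n)) := fun T => {h | (h : ℕ) / D ∈ T}
  have hA : #A = d * #S' := Fin.card_filter_val_div_mem rfl hS'
  -- A neighbourhood of size `≤ t` inside `range M` extends to some `t`-set `T`, and then every
  -- half-edge of `S'` is matched into a half-edge of `T`.
  have hsub : ({π | #(rightNeighbors d D π S') ≤ t} : Finset (Perm (Fin (d * n))))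
      ⊆ ((range M).powersetCard t).biUnion
          fun T => ({π | A.image π ⊆ B T} : Finset (Perm (Fin (d * n)))) := by
    intro π hπ
    have hrange : rightNeighbors d D π S' ⊆ range M :=
      image_subset_iff.2 fun h _ => mem_range.2 (Nat.div_lt_of_lt_mul (hDM.symm ▸ (π h).2))
    obtain ⟨T, hNT, hTM, hT⟩ := exists_subsuperset_card_eq hrange (mem_filter.1 hπ).2
      (by simpa using htM)
    refine mem_biUnion.2 ⟨T, mem_powersetCard.2 ⟨hTM, hT⟩,
      mem_filter.2 ⟨mem_univ _, image_subset_iff.2 fun x hx => ?_⟩⟩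
    exact mem_filter.2 ⟨mem_univ _, hNT (mem_image_of_mem _ hx)⟩
  refine (card_div_le_sum_card_div_of_subset_biUnion hsub (by positivity)).trans ?_
  calc ∑ T ∈ (range M).powersetCard t,
        (#({π | A.image π ⊆ B T} : Finset (Perm (Fin (d * n)))) : ℝ) / (d * n)!
      ≤ ∑ T ∈ (range M).powersetCard t, ((t : ℝ) / M) ^ (d * #S') := by
        refine sum_le_sum fun T hT => ?_
        rw [mem_powersetCard] at hT
        have hB : #(B T) = D * t := by rw [Fin.card_filter_val_div_mem hDM.symm hT.1, hT.2]
        have hDt : ((D * t : ℕ) : ℝ) / (d * n : ℕ) = t / M := by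
          rw [← hDM, Nat.cast_mul, Nat.cast_mul, mul_div_mul_left _ _ (by positivity)]
        have := Perm.card_filter_image_subset_div_factorial_le A (B T)
        rwa [Fintype.card_fin, hA, hB, hDt] at this
    _ = M.choose t * ((t : ℝ) / M) ^ (d * #S') := by
        rw [sum_const, card_powersetCard, card_range, nsmul_eq_mul]

theorem card_filter_exists_card_rightNeighbors_lt_div_le (hDM : D * M = d * n) (hN : 0 < d * n)
    {S : Finset ℕ} (hS : S ⊆ range n) (hSM : d * #S ≤ M) :
    (#{π : Perm (Fin (d * n)) | ∃ S' ⊆ S, S'.Nonempty ∧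
        (#(rightNeighbors d D π S') : ℝ) < 2 * d / 3 * #S'} : ℝ) / (d * n)!
      ≤ ∑ s ∈ Icc 1 #S, ((#S).choose s : ℝ) *
          (M.choose (2 * d * s / 3) * ((2 * d * s / 3 : ℕ) / M : ℝ) ^ (d * s)) := by
  have hsub : ({π | ∃ S' ⊆ S, S'.Nonempty ∧
        (#(rightNeighbors d D π S') : ℝ) < 2 * d / 3 * #S'} : Finset (Perm (Fin (d * n))))
      ⊆ (Icc 1 #S).biUnion fun s => (S.powersetCard s).biUnion
          fun S' => ({π | #(rightNeighbors d D π S') ≤ 2 * d * s / 3} : Finset _) := by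
    intro π hπ
    obtain ⟨S', hS'S, hne, hlt⟩ := (mem_filter.1 hπ).2
    have hlt' : #(rightNeighbors d D π S') * 3 < 2 * d * #S' := by
      have : (#(rightNeighbors d D π S') : ℝ) * 3 < 2 * d * #S' := by linarith
      exact_mod_cast this
    refine mem_biUnion.2 ⟨#S', mem_Icc.2 ⟨card_pos.2 hne, card_le_card hS'S⟩, mem_biUnion.2
      ⟨S', mem_powersetCard.2 ⟨hS'S, rfl⟩, mem_filter.2 ⟨mem_univ _, by omega⟩⟩⟩
  refine (card_div_le_sum_card_div_of_subset_biUnion hsub (by positivity)).trans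
    (sum_le_sum fun s hs => ?_)
  have htM : 2 * d * s / 3 ≤ M := by
    have : d * s ≤ d * #S := Nat.mul_le_mul_left d (mem_Icc.1 hs).2
    rw [mul_assoc]
    omega
  calc _ ≤ ∑ S' ∈ S.powersetCard s,
        (#({π | #(rightNeighbors d D π S') ≤ 2 * d * s / 3} : Finset (Perm (Fin (d * n)))) : ℝ)
          / (d * n)! :=
        card_div_le_sum_card_div_of_subset_biUnion subset_rfl (by positivity)
    _ ≤ ∑ S' ∈ S.powersetCard s,
        (M.choose (2 * d * s / 3) * ((2 * d * s / 3 : ℕ) / M : ℝ) ^ (d * s)) := by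
        refine sum_le_sum fun S' hS' => ?_
        obtain ⟨hS'S, rfl⟩ := mem_powersetCard.1 hS'
        exact card_filter_card_rightNeighbors_le_div_le hDM hN (hS'S.trans hS) htM
    _ = _ := by rw [sum_const, card_powersetCard, nsmul_eq_mul]

end ConfigurationModel

theorem three_pow_mul_sq_le_half {d c : ℕ} (hd : 1 ≤ d) (hc : 3 ^ (d + 1) * d ≤ c) :
    (3 : ℝ) ^ (d + 1) * (2 * d / (3 * c)) ^ 2 ≤ 1 / 2 := by
  have hd' : (1 : ℝ) ≤ d := by exact_mod_cast hd
  have hc' : (3 : ℝ) ^ (d + 1) * d ≤ c := by exact_mod_cast hc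
  have h3 : (3 : ℝ) ≤ 3 ^ (d + 1) := le_self_pow₀ (by norm_num) (by omega)
  have hc0 : (0 : ℝ) < c := by nlinarith
  have hε : (3 : ℝ) ^ (d + 1) * (2 * d / (3 * c)) ≤ 2 / 3 := by
    rw [mul_div_assoc', div_le_div_iff₀ (by positivity) (by positivity)]
    nlinarith
  have hε' : 2 * d / (3 * c) ≤ (2 / 9 : ℝ) := by
    rw [div_le_div_iff₀ (by positivity) (by positivity)]
    nlinarith
  calc (3 : ℝ) ^ (d + 1) * (2 * d / (3 * c)) ^ 2
      = (3 ^ (d + 1) * (2 * d / (3 * c))) * (2 * d / (3 * c)) := by ring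
    _ ≤ 2 / 3 * (2 / 9) := by gcongr
    _ ≤ 1 / 2 := by norm_num

theorem choose_mul_choose_mul_pow_le {d c k s : ℕ} (hd : 7 ≤ d) (hc : 3 ^ (d + 1) * d ≤ c)
    (hs : 0 < s) (hsk : s ≤ k) :
    (k.choose s : ℝ) * ((c * k).choose (2 * d * s / 3) *
        ((2 * d * s / 3 : ℕ) / (c * k : ℕ) : ℝ) ^ (d * s))
      ≤ (1 / 2) ^ s * ((s : ℝ) / k) ^ ((d + 5) / 6) := by
  set t := 2 * d * s / 3
  set m := (d + 5) / 6
  have hds : d + 7 * s ≤ d * s + 7 := by nlinarith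
  have ht : 3 * t ≤ 2 * (d * s) := by simp only [t, mul_assoc]; omega
  have ht0 : 0 < t := by simp only [t, mul_assoc]; omega
  obtain ⟨r, hr⟩ : ∃ r, d * s = t + (s + r) := ⟨d * s - t - s, by omega⟩
  have hsr : s ≤ r := by omega
  have hmr : m ≤ r := by omega
  have htds : t ≤ d * s := by omega
  have hk : 0 < k := hs.trans_le hsk
  have hc0 : 0 < c := lt_of_lt_of_le (by positivity) hc
  set ε : ℝ := 2 * d / (3 * c)
  set y : ℝ := s / k
  have hε0 : 0 ≤ ε := by positivity
  have hε1 : ε ≤ 1 := by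
    rw [div_le_one (by positivity)]
    have : (3 : ℝ) ^ (d + 1) * d ≤ c := by exact_mod_cast hc
    nlinarith [one_le_pow₀ (M₀ := ℝ) (n := d + 1) (by norm_num : (1 : ℝ) ≤ 3)]
  have hy0 : 0 ≤ y := by positivity
  have hy1 : y ≤ 1 := div_le_one_of_le₀ (by exact_mod_cast hsk) (by positivity)
  have hx : ((t : ℕ) : ℝ) / (c * k : ℕ) ≤ ε * y := by
    have ht' : (3 : ℝ) * t ≤ 2 * (d * s) := by exact_mod_cast ht
    simp only [ε, y]
    rw [div_mul_div_comm, div_le_div_iff₀ (by positivity) (by positivity)]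
    push_cast
    nlinarith [mul_le_mul_of_nonneg_right ht' (by positivity : (0 : ℝ) ≤ c * k)]
  have hkchoose : (k.choose s : ℝ) ≤ (3 / y) ^ s :=
    (Nat.choose_le_three_mul_div_pow k s).trans_eq (by simp only [y]; field_simp)
  have hMchoose : ((c * k).choose t : ℝ) * (((t : ℕ) : ℝ) / (c * k : ℕ)) ^ t ≤ 3 ^ t := by
    calc ((c * k).choose t : ℝ) * (((t : ℕ) : ℝ) / (c * k : ℕ)) ^ t
        ≤ (3 * (c * k : ℕ) / t) ^ t * (((t : ℕ) : ℝ) / (c * k : ℕ)) ^ t := by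
          gcongr; exact Nat.choose_le_three_mul_div_pow _ _
      _ = 3 ^ t := by
          rw [← mul_pow]; congr 1; field_simp
  calc (k.choose s : ℝ) * ((c * k).choose t * (((t : ℕ) : ℝ) / (c * k : ℕ)) ^ (d * s))
      = k.choose s * (((c * k).choose t) * (((t : ℕ) : ℝ) / (c * k : ℕ)) ^ t)
          * (((t : ℕ) : ℝ) / (c * k : ℕ)) ^ (s + r) := by rw [hr, pow_add]; ring
    _ ≤ (3 / y) ^ s * 3 ^ t * (ε * y) ^ (s + r) := by gcongr
    _ = 3 ^ s * 3 ^ t * ε ^ (s + r) * y ^ r := by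
        have hy : y ≠ 0 := by positivity
        rw [div_pow, mul_pow, pow_add y]
        field_simp
    _ ≤ 3 ^ s * 3 ^ (d * s) * ε ^ (2 * s) * y ^ m := by
        have h1 : (3 : ℝ) ^ t ≤ 3 ^ (d * s) := pow_le_pow_right₀ (by norm_num) htds
        have h2 : ε ^ (s + r) ≤ ε ^ (2 * s) := pow_le_pow_of_le_one hε0 hε1 (by omega)
        have h3 : y ^ r ≤ y ^ m := pow_le_pow_of_le_one hy0 hy1 hmr
        gcongr 3 ^ s * ?_ * ?_ * ?_
    _ = (3 ^ (d + 1) * ε ^ 2) ^ s * y ^ m := by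
        rw [mul_pow, ← pow_mul, ← pow_mul, add_one_mul, pow_add, mul_comm 2 s]; ring
    _ ≤ (1 / 2) ^ s * y ^ m := by
        gcongr; exact three_pow_mul_sq_le_half (by omega) hc

theorem sum_Icc_half_pow_mul_div_pow_le (k m : ℕ) :
    ∑ s ∈ Icc 1 k, (1 / 2 : ℝ) ^ s * ((s : ℝ) / k) ^ m
      ≤ (∑' s : ℕ, (s : ℝ) ^ m * (1 / 2) ^ s) / k ^ m := by
  calc ∑ s ∈ Icc 1 k, (1 / 2 : ℝ) ^ s * ((s : ℝ) / k) ^ m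
      = (∑ s ∈ Icc 1 k, (s : ℝ) ^ m * (1 / 2) ^ s) / k ^ m := by
        rw [sum_div]
        exact sum_congr rfl fun s _ => by rw [div_pow]; ring
    _ ≤ (∑' s : ℕ, (s : ℝ) ^ m * (1 / 2) ^ s) / k ^ m := by
        gcongr
        exact (summable_pow_mul_geometric_of_norm_lt_one m (by norm_num)).sum_le_tsum _
          fun s _ => by positivity

open Classical in
theorem stmt0 (d : ℕ) (hd : 7 ≤ d) :
    ∃ c₀ : ℕ, 0 < c₀ ∧
      ∀ c : ℕ, c₀ ≤ c →
        ∃ C : ℝ, 0 < C ∧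
          ∀ n k : ℕ, 0 < k → k ≤ n → c * k ∣ d * n →
            ∀ S : Finset ℕ, S ⊆ Finset.range n → S.card = k →
              (((Finset.univ : Finset (Equiv.Perm (Fin (d * n)))).filter
                  (fun π => ∃ S' ⊆ S, S'.Nonempty ∧
                    ((((Finset.univ : Finset (Fin (d * n))).filter
                          (fun h => h.val / d ∈ S')).image
                        (fun h => (π h).val / (d * n / (c * k)))).card : ℝ)
                      < 2 * d / 3 * S'.card)).card : ℝ)
                / (Fintype.card (Equiv.Perm (Fin (d * n))) : ℝ)
              ≤ C * (k : ℝ) ^ (-(d : ℝ) / 6) := by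
  refine ⟨3 ^ (d + 1) * d, by positivity, fun c hc => ?_⟩
  have hsum : Summable fun s : ℕ => (s : ℝ) ^ ((d + 5) / 6) * (1 / 2) ^ s :=
    summable_pow_mul_geometric_of_norm_lt_one _ (by norm_num)
  refine ⟨_, hsum.tsum_pos (fun _ => by positivity) 1 (by norm_num),
    fun n k hk hkn hdvd S hS hSk => ?_⟩
  have hdc : d ≤ c := le_trans (Nat.le_mul_of_pos_left d (by positivity)) hc
  have hbad := card_filter_exists_card_rightNeighbors_lt_div_le (Nat.div_mul_cancel hdvd)
    (Nat.mul_pos (by omega) (by omega)) hS (hSk ▸ Nat.mul_le_mul_right k hdc)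
  rw [hSk] at hbad
  rw [Fintype.card_perm, Fintype.card_fin]
  calc _ ≤ ∑ s ∈ Icc 1 k, (k.choose s : ℝ) * ((c * k).choose (2 * d * s / 3) *
          ((2 * d * s / 3 : ℕ) / (c * k : ℕ) : ℝ) ^ (d * s)) := hbad
    _ ≤ ∑ s ∈ Icc 1 k, (1 / 2 : ℝ) ^ s * ((s : ℝ) / k) ^ ((d + 5) / 6) :=
        sum_le_sum fun s hs => choose_mul_choose_mul_pow_le hd hc (mem_Icc.1 hs).1 (mem_Icc.1 hs).2
    _ ≤ (∑' s : ℕ, (s : ℝ) ^ ((d + 5) / 6) * (1 / 2) ^ s) / k ^ ((d + 5) / 6) :=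
        sum_Icc_half_pow_mul_div_pow_le k _
    _ ≤ _ := by
        have hm : (d : ℝ) ≤ 6 * ((d + 5) / 6 : ℕ) := by
          exact_mod_cast (by omega : d ≤ 6 * ((d + 5) / 6))
        rw [div_eq_mul_inv, ← Real.rpow_natCast, ← Real.rpow_neg (Nat.cast_nonneg k)]
        gcongr
        · exact_mod_cast hk
        · linarith
end

section
/- Let G be a bipartite graph with n left vertices, each of degree exactly d, and m' right vertices, and let 2 ≤ k ≤ n. Suppose that every nonempty set S of left vertices with |S| ≤ k satisfies |N(S)| > (d/2)|S|. Then 2^{m'} ≥ Σ_{i=0}^{⌊k/2⌋} binom(n, i); consequently m' ≥ ⌊k/2⌋·log₂(2n/k). -/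
/-!
View the biadjacency matrix of `G` as the parity-check matrix of a binary code. Expansion beyond
`d/2` gives every nonempty set `U` of at most `k` left vertices a unique neighbour: otherwise each
of the `|N(U)|` neighbours receives at least two of the `d|U|` edges leaving `U`. If two sets
`S ≠ T` of size at most `⌊k/2⌋` had the same syndrome, the unique neighbour of `S ∆ T` would be
adjacent to an odd number of vertices of exactly one of them. So the syndrome map is injective on
the Hamming ball of radius `⌊k/2⌋`, which is the Hamming bound `∑_{i ≤ k/2} C(n, i) ≤ 2^{m'}`; the
logarithmic bound follows from `(2n/k)^{⌊k/2⌋} ≤ (n/⌊k/2⌋)^{⌊k/2⌋} ≤ C(n, ⌊k/2⌋)`.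
-/

open Finset
open scoped symmDiff

namespace Finset

variable {α : Type*}

theorem card_filter_card_le [Fintype α] (r : ℕ) :
    #{s : Finset α | #s ≤ r} = ∑ i ∈ range (r + 1), (Fintype.card α).choose i := by
  rw [card_eq_sum_card_fiberwise (f := card) (t := range (r + 1))
    (fun s hs => mem_range_succ_iff.2 (mem_filter.1 hs).2)]
  refine sum_congr rfl fun i hi => ?_
  rw [← card_univ, ← card_powersetCard, powersetCard_eq_filter, filter_filter]
  congr 1
  ext s
  simp only [mem_filter, mem_univ, mem_powerset, subset_univ, true_and]
  exact ⟨fun h => h.2, fun h => ⟨h ▸ mem_range_succ_iff.1 hi, h⟩⟩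

variable [DecidableEq α]

theorem card_symmDiff_add_two_mul_card_inter (s t : Finset α) :
    #(s ∆ t) + 2 * #(s ∩ t) = #s + #t := by
  rw [symmDiff_eq_sup_sdiff_inf, sup_eq_union, inf_eq_inter,
    card_sdiff_of_subset inter_subset_union, ← card_union_add_card_inter]
  have := card_le_card (inter_subset_union (s := s) (t := t))
  omega

theorem filter_symmDiff (p : α → Prop) [DecidablePred p] (s t : Finset α) :
    (s ∆ t).filter p = s.filter p ∆ t.filter p := by
  ext a
  simp only [mem_filter, mem_symmDiff]
  tauto

end Finset

theorem Nat.div_pow_le_choose {K : Type*} [Field K] [LinearOrder K] [IsStrictOrderedRing K]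
    {r n : ℕ} (hrn : r ≤ n) : ((n : K) / r) ^ r ≤ n.choose r := by
  induction r generalizing n with
  | zero => simp
  | succ r ih =>
    obtain ⟨m, rfl⟩ : ∃ m, n = m + 1 := ⟨n - 1, by omega⟩
    have hrm : r ≤ m := by omega
    have hratio : ((m + 1 : K) / (r + 1)) ^ r ≤ ((m : K) / r) ^ r := by
      rcases Nat.eq_zero_or_pos r with rfl | hr
      · simp
      · refine pow_le_pow_left₀ (by positivity) ?_ r
        rw [div_le_div_iff₀ (by positivity) (by exact_mod_cast hr)]
        have : (r : K) ≤ m := by exact_mod_cast hrm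
        nlinarith
    have hpascal : ((m + 1).choose (r + 1) : K) * (r + 1) = (m + 1) * m.choose r := by
      exact_mod_cast (Nat.add_one_mul_choose_eq m r).symm
    calc ((↑(m + 1) : K) / ↑(r + 1)) ^ (r + 1)
        = (m + 1 : K) / (r + 1) * ((m + 1 : K) / (r + 1)) ^ r := by push_cast; ring
      _ ≤ (m + 1 : K) / (r + 1) * m.choose r := by
          gcongr
          exact hratio.trans (ih hrm)
      _ = (m + 1).choose (r + 1) := by
          rw [div_mul_eq_mul_div, div_eq_iff (by positivity), hpascal]

theorem Real.mul_logb_le_of_pow_le {b x : ℝ} {r m : ℕ} (hb : 1 < b) (hx : 0 < x)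
    (h : x ^ r ≤ b ^ m) : r * logb b x ≤ m := by
  have := Real.logb_le_logb_of_le hb (by positivity) h
  rwa [logb_pow, logb_pow, logb_self_eq_one hb, mul_one] at this

section ParityCheck

variable {α β : Type*} [Fintype β] (Adj : α → β → Prop) [∀ a b, Decidable (Adj a b)]

/-- The syndrome of (the indicator vector of) `S` under the parity-check matrix over `𝔽₂` whose
rows are indexed by `β` and whose entry `(b, a)` is `1` iff `Adj a b`. -/
def syndrome (S : Finset α) : Finset β := {b | Odd #{a ∈ S | Adj a b}}

variable {Adj}

theorem exists_unique_neighbor_of_expansion {d : ℕ} {S : Finset α}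
    (hdeg : ∀ a ∈ S, #{b | Adj a b} = d)
    (hexp : d * #S < 2 * #{b | ∃ a ∈ S, Adj a b}) :
    ∃ b, #{a ∈ S | Adj a b} = 1 := by
  by_contra! hne
  set N : Finset β := {b | ∃ a ∈ S, Adj a b}
  have hmany : ∀ b ∈ N, 2 ≤ #{a ∈ S | Adj a b} := by
    intro b hb
    obtain ⟨a, ha, hab⟩ := (mem_filter.1 hb).2
    have : 0 < #{a ∈ S | Adj a b} := card_pos.2 ⟨a, mem_filter.2 ⟨ha, hab⟩⟩
    have := hne b
    omega
  have hfew : ∀ a ∈ S, #{b ∈ N | Adj a b} ≤ d := fun a ha =>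
    hdeg a ha ▸ card_le_card (filter_subset_filter _ (subset_univ N))
  have := card_mul_le_card_mul' Adj hmany hfew
  rw [mul_comm #S] at this
  omega

theorem syndrome_injOn [DecidableEq α] {r : ℕ}
    (huniq : ∀ U : Finset α, U.Nonempty → #U ≤ 2 * r → ∃ b, #{a ∈ U | Adj a b} = 1) :
    Set.InjOn (syndrome Adj) {S | #S ≤ r} := by
  intro S hS T hT hST
  by_contra hne
  have hsize := card_symmDiff_add_two_mul_card_inter S T
  obtain ⟨b, hb⟩ := huniq (S ∆ T) (symmDiff_nonempty.2 hne) (by simp at hS hT; omega)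
  -- `S ∆ T` has a unique neighbour `b`, so `S` and `T` see `b` with different parities.
  have hsplit := card_symmDiff_add_two_mul_card_inter {a ∈ S | Adj a b} {a ∈ T | Adj a b}
  rw [← filter_symmDiff, hb] at hsplit
  have hpar : Odd #{a ∈ S | Adj a b} ↔ Odd #{a ∈ T | Adj a b} := by
    simpa [syndrome] using congrArg (b ∈ ·) hST
  rw [Nat.odd_iff, Nat.odd_iff] at hpar
  omega

theorem sum_choose_le_two_pow_of_unique_neighbors [Fintype α] [DecidableEq α] {r : ℕ}
    (huniq : ∀ U : Finset α, U.Nonempty → #U ≤ 2 * r → ∃ b, #{a ∈ U | Adj a b} = 1) :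
    ∑ i ∈ range (r + 1), (Fintype.card α).choose i ≤ 2 ^ Fintype.card β := by
  rw [← card_filter_card_le, ← Fintype.card_finset, ← card_univ]
  exact card_le_card_of_injOn (syndrome Adj) (fun _ _ => mem_univ _)
    (by simpa using syndrome_injOn huniq)

end ParityCheck

open Classical in
theorem stmt1 (n m' d k : ℕ) (hk2 : 2 ≤ k) (hkn : k ≤ n)
    (Adj : Fin n → Fin m' → Prop)
    (hdeg : ∀ j : Fin n,
      ((Finset.univ : Finset (Fin m')).filter (fun i => Adj j i)).card = d)
    (hexp : ∀ S : Finset (Fin n), S.Nonempty → S.card ≤ k →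
      (d : ℝ) / 2 * S.card <
        (((Finset.univ : Finset (Fin m')).filter (fun i => ∃ j ∈ S, Adj j i)).card : ℝ)) :
    (∑ i ∈ Finset.range (k / 2 + 1), n.choose i) ≤ 2 ^ m' ∧
      ((k / 2 : ℕ) : ℝ) * Real.logb 2 (2 * n / k) ≤ (m' : ℝ) := by
  set r := k / 2 with hr_def
  have huniq (U : Finset (Fin n)) (hU : U.Nonempty) (hUr : #U ≤ 2 * r) :
      ∃ i, #{j ∈ U | Adj j i} = 1 := by
    refine exists_unique_neighbor_of_expansion (fun j _ => hdeg j) ?_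
    have hN : (d : ℝ) * #U < 2 * #{i | ∃ j ∈ U, Adj j i} := by linarith [hexp U hU (by omega)]
    -- `convert` bridges the classical instance deciding `∃ j ∈ U, Adj j i` in the hypothesis
    convert (by exact_mod_cast hN : d * #U < 2 * #{i | ∃ j ∈ U, Adj j i})
  have hball := sum_choose_le_two_pow_of_unique_neighbors huniq
  rw [Fintype.card_fin, Fintype.card_fin] at hball
  have hk : (0 : ℝ) < k := by exact_mod_cast (by omega : 0 < k)
  have hn : (0 : ℝ) < n := by exact_mod_cast (by omega : 0 < n)
  have hr : (0 : ℝ) < r := by exact_mod_cast (by omega : 0 < r)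
  have hrk : (2 * r : ℝ) ≤ k := by exact_mod_cast (by omega : 2 * r ≤ k)
  refine ⟨hball, Real.mul_logb_le_of_pow_le one_lt_two (by positivity) ?_⟩
  calc ((2 * n / k : ℝ)) ^ r ≤ ((n : ℝ) / r) ^ r := by
        refine pow_le_pow_left₀ (by positivity) ?_ r
        rw [div_le_div_iff₀ hk hr]
        nlinarith
    _ ≤ n.choose r := Nat.div_pow_le_choose (by omega)
    _ ≤ ∑ i ∈ range (r + 1), n.choose i := by
        exact_mod_cast single_le_sum (fun _ _ => Nat.zero_le _) (self_mem_range_succ r)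
    _ ≤ 2 ^ m' := by exact_mod_cast hball
end

section
/- Let G be a bipartite graph with left vertices {1,…,n} and right vertices {1,…,m'}, in which every left vertex has degree exactly d, and let A ∈ 𝔽₂^{m'×n} be its biadjacency matrix (A_{ij} = 1 if and only if right vertex i is adjacent to left vertex j). If every nonempty set S of left vertices with |S| ≤ k satisfies |N(S)| > (d/2)|S|, then every nonzero vector v ∈ 𝔽₂ⁿ with Av = 0 has Hamming weight strictly greater than k; that is, the binary linear code with parity-check matrix A has minimum distance greater than k. -/
/- STATEMENT 2: Let `A ∈ 𝔽₂^{m'×n}` be the biadjacency matrix of a bipartite graph in which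
every left vertex has degree exactly `d` (i.e. every column of `A` has exactly `d` ones).
If every nonempty set `S` of at most `k` left vertices satisfies `|N(S)| > (d/2)|S|`, then
every nonzero `v ∈ 𝔽₂ⁿ` with `A v = 0` has Hamming weight strictly greater than `k`. -/
open Classical in
theorem stmt2 (n m' d k : ℕ) (A : Matrix (Fin m') (Fin n) (ZMod 2))
    (hdeg : ∀ j : Fin n,
      ((Finset.univ : Finset (Fin m')).filter (fun i => A i j = 1)).card = d)
    (hexp : ∀ S : Finset (Fin n), S.Nonempty → S.card ≤ k →
      (d : ℝ) / 2 * S.card <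
        (((Finset.univ : Finset (Fin m')).filter (fun i => ∃ j ∈ S, A i j = 1)).card : ℝ)) :
    ∀ v : Fin n → ZMod 2, v ≠ 0 → A.mulVec v = 0 →
      k < ((Finset.univ : Finset (Fin n)).filter (fun j => v j ≠ 0)).card := by
  intro v hv hAv
  set S := (Finset.univ : Finset (Fin n)).filter (fun j => v j ≠ 0) with hSdef
  by_contra hk
  push_neg at hk
  have hSne : S.Nonempty := by
    rcases Function.ne_iff.mp hv with ⟨j, hj⟩
    exact ⟨j, Finset.mem_filter.mpr ⟨Finset.mem_univ j, by simpa using hj⟩⟩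
  set T := (Finset.univ : Finset (Fin m')).filter (fun i => ∃ j ∈ S, A i j = 1) with hTdef
  have hvone : ∀ j ∈ S, v j = 1 := by
    intro j hj
    have h : v j ≠ 0 := by simpa [hSdef] using hj
    have h2 : ∀ a : ZMod 2, a ≠ 0 → a = 1 := by decide
    exact h2 _ h
  -- degree of each right vertex into S
  have hrow : ∀ i : Fin m',
      ((S.filter (fun j => A i j = 1)).card : ZMod 2) = 0 := by
    intro i
    have h0 : A.mulVec v i = 0 := congrFun hAv i
    have h1 : ∑ j ∈ S, A i j = 0 := by
      rw [Matrix.mulVec, dotProduct] at h0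
      calc ∑ j ∈ S, A i j = ∑ j ∈ S, A i j * v j := by
            exact Finset.sum_congr rfl (fun j hj => by rw [hvone j hj, mul_one])
        _ = ∑ j, A i j * v j := by
            refine Finset.sum_subset (Finset.filter_subset _ _) ?_
            intro j _ hj
            have : v j = 0 := by
              by_contra h; exact hj (Finset.mem_filter.mpr ⟨Finset.mem_univ j, h⟩)
            simp [this]
        _ = 0 := h0
    have h2 : ∑ j ∈ S, A i j = ((S.filter (fun j => A i j = 1)).card : ZMod 2) := by
      have hbit : ∀ a : ZMod 2, a = if a = 1 then 1 else 0 := by decide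
      calc ∑ j ∈ S, A i j = ∑ j ∈ S, (if A i j = 1 then (1 : ZMod 2) else 0) :=
            Finset.sum_congr rfl (fun j _ => hbit _)
        _ = _ := by rw [Finset.sum_boole]
    rw [← h2, h1]
  have hrow2 : ∀ i ∈ T, 2 ≤ (S.filter (fun j => A i j = 1)).card := by
    intro i hi
    rcases Finset.mem_filter.mp hi with ⟨-, j, hjS, hjA⟩
    have hpos : 0 < (S.filter (fun j => A i j = 1)).card :=
      Finset.card_pos.mpr ⟨j, Finset.mem_filter.mpr ⟨hjS, hjA⟩⟩
    have heven : (2 : ℕ) ∣ (S.filter (fun j => A i j = 1)).card :=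
      (ZMod.natCast_eq_zero_iff _ 2).mp (hrow i)
    omega
  -- double counting
  have hcount : d * S.card = ∑ i : Fin m', (S.filter (fun j => A i j = 1)).card := by
    calc d * S.card = ∑ j ∈ S, d := by rw [Finset.sum_const, smul_eq_mul, mul_comm]
      _ = ∑ j ∈ S, ((Finset.univ : Finset (Fin m')).filter (fun i => A i j = 1)).card :=
          Finset.sum_congr rfl (fun j _ => (hdeg j).symm)
      _ = ∑ j ∈ S, ∑ i : Fin m', (if A i j = 1 then 1 else 0) := by
          simp [Finset.sum_boole]
      _ = ∑ i : Fin m', ∑ j ∈ S, (if A i j = 1 then 1 else 0) := Finset.sum_comm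
      _ = _ := by simp [Finset.sum_boole]
  have hzero : ∀ i ∈ (Finset.univ : Finset (Fin m')), i ∉ T →
      (S.filter (fun j => A i j = 1)).card = 0 := by
    intro i _ hi
    rw [Finset.card_eq_zero, Finset.filter_eq_empty_iff]
    intro j hj hA
    exact hi (Finset.mem_filter.mpr ⟨Finset.mem_univ i, j, hj, hA⟩)
  have hge : 2 * T.card ≤ d * S.card := by
    rw [hcount, ← Finset.sum_subset (Finset.subset_univ T) hzero]
    calc 2 * T.card = ∑ _i ∈ T, 2 := by rw [Finset.sum_const, smul_eq_mul, mul_comm]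
      _ ≤ ∑ i ∈ T, (S.filter (fun j => A i j = 1)).card := Finset.sum_le_sum hrow2
  have hlt : (d : ℝ) / 2 * S.card < (T.card : ℝ) := hexp S hSne hk
  have : (d : ℝ) * S.card < 2 * T.card := by linarith
  have : d * S.card < 2 * T.card := by exact_mod_cast this
  omega
end

section
/- Let G be a bipartite graph in which every left vertex has degree exactly d, and let S be a finite set of left vertices such that every nonempty subset S' ⊆ S satisfies |N(S')| ≥ (2d/3)|S'|. Then for every nonempty subset S' ⊆ S, at least half of the vertices of N(S') are S'-leaf nodes; that is, the number of right vertices adjacent to exactly one vertex of S' is at least |N(S')|/2. -/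
/-! Let `c i` be the number of neighbours in `S'` of a right vertex `i`. Double counting gives
`∑ c i = d |S'|`; every vertex of `N(S')` has `c i ≥ 1` and every non-leaf of it `c i ≥ 2`, so
`2 |N(S')| ≤ d |S'| + #leaves`. Expansion gives `d |S'| ≤ (3/2) |N(S')|`, hence
`#leaves ≥ |N(S')| / 2`. -/

open Finset

theorem Finset.two_mul_card_filter_ne_zero_le {ι : Type*} (s : Finset ι) (c : ι → ℕ) :
    2 * #{i ∈ s | c i ≠ 0} ≤ ∑ i ∈ s, c i + #{i ∈ s | c i = 1} := by
  simp only [card_filter, mul_sum, ← sum_add_distrib]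
  gcongr with i
  split_ifs <;> omega

section Bipartite

variable {V W : Type*} [Fintype W] (Adj : V → W → Prop) [∀ j i, Decidable (Adj j i)]

/-- `N(T)`. -/
def neighbors (T : Finset V) : Finset W := {i | ∃ j ∈ T, Adj j i}

/-- The `T`-leaf nodes. -/
def leaves (T : Finset V) : Finset W := {i | #{j ∈ T | Adj j i} = 1}

theorem two_mul_card_neighbors_le_sum_degree_add_card_leaves (T : Finset V) :
    2 * #(neighbors Adj T) ≤ ∑ j ∈ T, #{i | Adj j i} + #(leaves Adj T) := by
  have hN : neighbors Adj T = ({i | #{j ∈ T | Adj j i} ≠ 0} : Finset W) := by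
    ext i
    simp [neighbors, filter_eq_empty_iff]
  have hdc : ∑ j ∈ T, #{i | Adj j i} = ∑ i, #{j ∈ T | Adj j i} :=
    sum_card_bipartiteAbove_eq_sum_card_bipartiteBelow Adj
  rw [hN, hdc]
  exact two_mul_card_filter_ne_zero_le _ _

end Bipartite

open Classical in
theorem stmt4_general {V W : Type*} [Fintype W] (Adj : V → W → Prop) (d : ℕ)
    (hdeg : ∀ j : V, ((Finset.univ : Finset W).filter (fun i => Adj j i)).card = d)
    (S : Finset V)
    (hexp : ∀ S' ⊆ S, S'.Nonempty →
      2 * (d : ℝ) / 3 * S'.card ≤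
        (((Finset.univ : Finset W).filter (fun i => ∃ j ∈ S', Adj j i)).card : ℝ)) :
    ∀ S' ⊆ S, S'.Nonempty →
      (((Finset.univ : Finset W).filter (fun i => ∃ j ∈ S', Adj j i)).card : ℝ) / 2 ≤
        (((Finset.univ : Finset W).filter
            (fun i => (S'.filter (fun j => Adj j i)).card = 1)).card : ℝ) := by
  intro S' hS' hne
  have hcount : 2 * #(neighbors Adj S') ≤ d * #S' + #(leaves Adj S') := by
    simpa [hdeg, mul_comm] using two_mul_card_neighbors_le_sum_degree_add_card_leaves Adj S'
  have hcountR : 2 * (#(neighbors Adj S') : ℝ) ≤ d * #S' + #(leaves Adj S') := by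
    exact_mod_cast hcount
  have hexpS' : 2 * (d : ℝ) / 3 * #S' ≤ #(neighbors Adj S') := hexp S' hS' hne
  change (#(neighbors Adj S') : ℝ) / 2 ≤ #(leaves Adj S')
  linarith

open Classical in
theorem stmt4 {V W : Type*} [Fintype V] [Fintype W] (Adj : V → W → Prop) (d : ℕ)
    (hdeg : ∀ j : V, ((Finset.univ : Finset W).filter (fun i => Adj j i)).card = d)
    (S : Finset V)
    (hexp : ∀ S' ⊆ S, S'.Nonempty →
      2 * (d : ℝ) / 3 * S'.card ≤
        (((Finset.univ : Finset W).filter (fun i => ∃ j ∈ S', Adj j i)).card : ℝ)) :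
    ∀ S' ⊆ S, S'.Nonempty →
      (((Finset.univ : Finset W).filter (fun i => ∃ j ∈ S', Adj j i)).card : ℝ) / 2 ≤
        (((Finset.univ : Finset W).filter
            (fun i => (S'.filter (fun j => Adj j i)).card = 1)).card : ℝ) :=
  stmt4_general Adj d hdeg S hexp
end

section
/- For every integer R ≥ 2, the density of coprime R-tuples converges to 1/ζ(R): namely, |{(c₁,…,c_R) ∈ {1,…,M}^R : gcd(c₁,…,c_R) = 1}| / M^R → 1/ζ(R) as M → ∞, where ζ denotes the Riemann zeta function. -/
/-!
Writing the indicator of `gcd c = 1` as `∑_{d ∣ gcd c} μ d` and swapping the sums counts the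
coprime tuples in `{1,…,M}^R` as `∑_{d ≤ M} μ d ⌊M/d⌋^R`. Divided by `M^R`, the `d`-th term tends
to `μ d / d^R` and is bounded by `1 / d^R`, which is summable for `R ≥ 2`; dominated convergence
gives the limit `∑ μ d / d^R = 1/ζ(R)`.
-/

open Filter Finset ArithmeticFunction Topology
open scoped ArithmeticFunction.Moebius LSeries.notation

lemma sum_divisors_moebius (n : ℕ) : ∑ d ∈ n.divisors, μ d = if n = 1 then 1 else 0 := by
  rw [← coe_mul_zeta_apply, moebius_mul_coe_zeta, one_apply]

section Box

variable {ι : Type*} [Fintype ι] [DecidableEq ι]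

lemma card_filter_dvd_gcd_piFinset_Icc (M d : ℕ) :
    #{c ∈ Fintype.piFinset (fun _ : ι => Icc 1 M) | d ∣ univ.gcd c}
      = (M / d) ^ Fintype.card ι := by
  have : {c ∈ Fintype.piFinset (fun _ : ι => Icc 1 M) | d ∣ univ.gcd c}
      = Fintype.piFinset fun _ : ι => {x ∈ Ioc 0 M | d ∣ x} := by
    ext c
    simp only [mem_filter, Fintype.mem_piFinset, Finset.dvd_gcd_iff, mem_univ, forall_const]
    exact ⟨fun h i => ⟨h.1 i, h.2 i⟩, fun h => ⟨fun i => (h i).1, fun i => (h i).2⟩⟩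
  rw [this, Fintype.card_piFinset, prod_const, Nat.Ioc_filter_dvd_card_eq_div, card_univ]

lemma divisors_gcd_eq_filter_Icc [Nonempty ι] {M : ℕ} {c : ι → ℕ}
    (hc : c ∈ Fintype.piFinset fun _ : ι => Icc 1 M) :
    (univ.gcd c).divisors = {d ∈ Icc 1 M | d ∣ univ.gcd c} := by
  obtain ⟨i⟩ := ‹Nonempty ι›
  have hci := mem_Icc.mp (Fintype.mem_piFinset.mp hc i)
  have hgcd : univ.gcd c ∣ c i := gcd_dvd (mem_univ i)
  ext d
  simp only [Nat.mem_divisors, mem_filter, mem_Icc]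
  constructor
  · rintro ⟨hd, -⟩
    have hdc := hd.trans hgcd
    exact ⟨⟨Nat.pos_of_dvd_of_pos hdc hci.1, (Nat.le_of_dvd hci.1 hdc).trans hci.2⟩, hd⟩
  · rintro ⟨-, hd⟩
    exact ⟨hd, (Nat.pos_of_dvd_of_pos hgcd hci.1).ne'⟩

lemma card_gcd_eq_one_piFinset_Icc [Nonempty ι] (M : ℕ) :
    (#{c ∈ Fintype.piFinset (fun _ : ι => Icc 1 M) | univ.gcd c = 1} : ℤ)
      = ∑ d ∈ Icc 1 M, μ d * (M / d : ℕ) ^ Fintype.card ι := by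
  calc (#{c ∈ Fintype.piFinset (fun _ : ι => Icc 1 M) | univ.gcd c = 1} : ℤ)
      = ∑ c ∈ Fintype.piFinset (fun _ : ι => Icc 1 M),
          ∑ d ∈ Icc 1 M with d ∣ univ.gcd c, μ d := by
        rw [card_filter, Nat.cast_sum]
        refine sum_congr rfl fun c hc => ?_
        rw [← divisors_gcd_eq_filter_Icc hc, sum_divisors_moebius, Nat.cast_ite, Nat.cast_one,
          Nat.cast_zero]
    _ = ∑ d ∈ Icc 1 M, ∑ c ∈ Fintype.piFinset (fun _ : ι => Icc 1 M),
          if d ∣ univ.gcd c then μ d else 0 := by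
        simp_rw [sum_filter]
        exact sum_comm
    _ = ∑ d ∈ Icc 1 M, μ d * (M / d : ℕ) ^ Fintype.card ι := by
        refine sum_congr rfl fun d _ => ?_
        rw [← sum_filter, sum_const, card_filter_dvd_gcd_piFinset_Icc, nsmul_eq_mul, mul_comm,
          Nat.cast_pow]

end Box

lemma tendsto_natDiv_div_self (d : ℕ) :
    Tendsto (fun M : ℕ => ((M / d : ℕ) : ℝ) / M) atTop (𝓝 (1 / d)) := by
  rcases Nat.eq_zero_or_pos d with rfl | hd
  · simp
  have hfloor : Tendsto (fun M : ℕ => (⌊(M : ℝ) / d⌋₊ : ℝ) / ((M : ℝ) / d) * (1 / d)) atTop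
      (𝓝 (1 * (1 / d))) :=
    (tendsto_nat_floor_div_atTop.comp
      (tendsto_natCast_atTop_atTop.atTop_div_const (by exact_mod_cast hd))).mul_const _
  refine (one_mul (1 / (d : ℝ)) ▸ hfloor).congr fun M => ?_
  rw [Nat.floor_div_eq_div]
  field_simp

lemma natDiv_div_self_le (M d : ℕ) : ((M / d : ℕ) : ℝ) / M ≤ 1 / d := by
  rcases Nat.eq_zero_or_pos M with rfl | hM
  · simp
  calc ((M / d : ℕ) : ℝ) / M ≤ (M / d : ℝ) / M := by gcongr; exact Nat.cast_div_le
    _ = 1 / d := by field_simp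

lemma tendsto_sum_mul_natDiv_div_pow_LSeries {f : ℕ → ℂ} {C : ℝ} (hf : ∀ n, ‖f n‖ ≤ C)
    {R : ℕ} (hR : 1 < R) :
    Tendsto (fun M : ℕ => ∑ d ∈ Icc 1 M, f d * (((M / d : ℕ) : ℂ) / M) ^ R) atTop
      (𝓝 (L f R)) := by
  set F : ℕ → ℕ → ℂ := fun M d => f d * (((M / d : ℕ) : ℂ) / M) ^ R
  have hR0 : R ≠ 0 := by omega
  have hC : 0 ≤ C := (norm_nonneg _).trans (hf 0)
  have hsum_eq_tsum (M : ℕ) : ∑ d ∈ Icc 1 M, F M d = ∑' d, F M d := by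
    refine (tsum_eq_sum fun d hd => ?_).symm
    have : M / d = 0 := Nat.div_eq_zero_iff.mpr (by simp only [mem_Icc] at hd; omega)
    simp [F, this, hR0]
  have hlim (d : ℕ) : Tendsto (F · d) atTop (𝓝 (LSeries.term f R d)) := by
    rcases eq_or_ne d 0 with rfl | hd
    · simp [F, hR0]
    have h := (((Complex.continuous_ofReal.tendsto _).comp (tendsto_natDiv_div_self d)).pow R)
      |>.const_mul (f d)
    rw [LSeries.term_of_ne_zero hd, Complex.cpow_natCast]
    simpa [F, Function.comp_def, div_eq_mul_inv] using h
  have hbound (M d : ℕ) : ‖F M d‖ ≤ C * ((d : ℝ) ^ R)⁻¹ := by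
    rw [norm_mul, norm_pow, norm_div, Complex.norm_natCast, Complex.norm_natCast, ← one_div,
      ← one_div_pow]
    exact mul_le_mul (hf d) (pow_le_pow_left₀ (by positivity) (natDiv_div_self_le M d) R)
      (by positivity) hC
  exact (tendsto_tsum_of_dominated_convergence ((Real.summable_nat_pow_inv.mpr hR).mul_left C)
    hlim (Eventually.of_forall hbound)).congr fun M => (hsum_eq_tsum M).symm

lemma one_div_riemannZeta_eq_LSeries_moebius {s : ℂ} (hs : 1 < s.re) :
    1 / riemannZeta s = L ↗μ s := by
  rw [← LSeries_one_eq_riemannZeta hs]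
  exact (eq_one_div_of_mul_eq_one_left <|
    mul_comm (L 1 s) _ ▸ LSeries_one_mul_Lseries_moebius hs).symm

theorem stmt7 (R : ℕ) (hR : 2 ≤ R) :
    Filter.Tendsto
      (fun M : ℕ =>
        ((((Fintype.piFinset (fun _ : Fin R => Finset.Icc 1 M)).filter
              (fun c => Finset.univ.gcd c = 1)).card : ℂ) / (M : ℂ) ^ R))
      Filter.atTop (nhds (1 / riemannZeta R)) := by
  have : NeZero R := ⟨by omega⟩
  rw [one_div_riemannZeta_eq_LSeries_moebius (by rw [Complex.natCast_re, Nat.one_lt_cast]; omega)]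
  refine (tendsto_sum_mul_natDiv_div_pow_LSeries (C := 1)
    (fun n => by rw [Complex.norm_intCast]; exact_mod_cast abs_moebius_le_one) hR).congr
    fun M => ?_
  have hcount := congrArg (Int.cast : ℤ → ℂ) (card_gcd_eq_one_piFinset_Icc (ι := Fin R) M)
  simp only [Int.cast_natCast, Int.cast_sum, Int.cast_mul, Int.cast_pow, Fintype.card_fin] at hcount
  rw [hcount, sum_div]
  simp_rw [div_pow, mul_div_assoc]
end

section
/- For all complex numbers w and v with w ≠ 0 and w + v ≠ 0, the angular displacement between w + v and w is at most π|v|/|w|; that is, |Arg((w + v)/w)| ≤ π·|v|/|w|, where Arg denotes the principal argument taking values in (−π, π]. -/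
/-! Write `ζ = r e^{iθ}` with `θ = arg ζ`. Then `‖ζ - 1‖² - sin² θ = (r - cos θ)² ≥ 0`, so the
distance from `ζ` to `1` dominates `|sin θ|`, and Jordan's inequality `2|θ|/π ≤ sin |θ|` turns this
into `|θ| ≤ (π/2)‖ζ - 1‖` whenever `|θ| ≤ π/2`. Otherwise `Re ζ < 0`, so `‖ζ - 1‖ ≥ 1` and the
trivial bound `|θ| ≤ π` suffices. Apply this to `ζ = (w + v)/w`, for which `ζ - 1 = v/w`. -/

namespace Real

theorem sin_abs_le_abs_sin (x : ℝ) : sin |x| ≤ |sin x| := by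
  rcases abs_choice x with h | h <;> rw [h]
  · exact le_abs_self _
  · rw [sin_neg]
    exact neg_le_abs _

end Real

open Real

namespace Complex

theorem abs_sin_arg_le_norm_sub_one (ζ : ℂ) : |Real.sin (arg ζ)| ≤ ‖ζ - 1‖ := by
  refine abs_le_of_sq_le_sq ?_ (norm_nonneg _)
  have hre := norm_mul_cos_arg ζ
  have him := norm_mul_sin_arg ζ
  have hdist : ‖ζ - 1‖ ^ 2 = (ζ.re - 1) ^ 2 + ζ.im ^ 2 := by
    rw [Complex.sq_norm, normSq_apply]
    simp only [sub_re, one_re, sub_im, one_im, sub_zero]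
    ring
  have hexcess : ‖ζ - 1‖ ^ 2 - Real.sin (arg ζ) ^ 2 = (‖ζ‖ - Real.cos (arg ζ)) ^ 2 := by
    rw [hdist, ← hre, ← him]
    linear_combination (‖ζ‖ ^ 2 - 1) * Real.sin_sq_add_cos_sq (arg ζ)
  linarith [sq_nonneg (‖ζ‖ - Real.cos (arg ζ))]

theorem abs_arg_le_pi_mul_norm_sub_one (ζ : ℂ) : |arg ζ| ≤ π * ‖ζ - 1‖ := by
  rcases le_or_gt 0 ζ.re with hre | hre
  · have hθ : |arg ζ| ≤ π / 2 := abs_arg_le_pi_div_two_iff.mpr hre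
    have hjordan : 2 / π * |arg ζ| ≤ ‖ζ - 1‖ :=
      (mul_le_sin (abs_nonneg _) hθ).trans <|
        (sin_abs_le_abs_sin _).trans (abs_sin_arg_le_norm_sub_one ζ)
    rw [div_mul_eq_mul_div, div_le_iff₀ pi_pos] at hjordan
    linarith [mul_nonneg pi_pos.le (norm_nonneg (ζ - 1))]
  · have hdist : 1 ≤ ‖ζ - 1‖ := by
      calc (1 : ℝ) ≤ |(ζ - 1).re| := by
            rw [sub_re, one_re, abs_of_neg (by linarith)]
            linarith
        _ ≤ ‖ζ - 1‖ := abs_re_le_norm _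
    calc |arg ζ| ≤ π := abs_arg_le_pi ζ
      _ ≤ π * ‖ζ - 1‖ := le_mul_of_one_le_right pi_pos.le hdist

end Complex

theorem stmt8_general (w v : ℂ) (hw : w ≠ 0) :
    |Complex.arg ((w + v) / w)| ≤ Real.pi * ‖v‖ / ‖w‖ := by
  have hsub : (w + v) / w - 1 = v / w := by field_simp; ring
  simpa only [hsub, norm_div, mul_div_assoc] using
    Complex.abs_arg_le_pi_mul_norm_sub_one ((w + v) / w)

theorem stmt8 (w v : ℂ) (hw : w ≠ 0) (hwv : w + v ≠ 0) :
    |Complex.arg ((w + v) / w)| ≤ Real.pi * ‖v‖ / ‖w‖ :=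
  stmt8_general w v hw
end
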